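/- arXiv:2303.00811 — 6 statements merged into one kernel-verified Lean document; each statement's English description precedes it below -/
import Mathlib

section
/- There is an absolute constant c₀ ≥ 1 with the following property. Let c ≥ c₀, let G = (V, E, w) be a weighted directed graph with nonnegative integer edge weights, let n ≥ max(|V|, 2) and let d be a positive integer, and let S consist of s = ⌈c·log₂ n⌉ independent uniformly random elements X₁, …, X_s of V. Then with probability at least 1 − n^{−8}, for every v ∈ V simultaneously: (i) if |{i : X_i ∈ Ball^in_G(v, d/4)}| ≤ 0.6·s then |Ball^in_G(v, d/4)| ≤ 0.7·|V|; (ii) if |{i : X_i ∈ Ball^out_G(v, d/4)}| ≤ 0.6·s then |Ball^out_G(v, d/4)| ≤ 0.7·|V|; and (iii) if both |{i : X_i ∈ Ball^in_G(v, d/4)}| > 0.6·s and |{i : X_i ∈ Ball^out_G(v, d/4)}| > 0.6·s, then |Ball^in_G(v, d/4)| > 0.5·|V| and |Ball^out_G(v, d/4)| > 0.5·|V|. -/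
open Real

/-- A walk from `u` to `v` along the edge set `E`; the list records the vertices
visited after `u` (so `[]` is the empty walk, requiring `u = v`). -/
def IsWalk {V : Type*} (E : Set (V × V)) : V → V → List V → Prop
  | u, v, [] => u = v
  | u, v, x :: xs => (u, x) ∈ E ∧ IsWalk E x v xs

/-- The weight of a walk starting at `u` whose subsequent vertices are given by the list. -/
def walkWeight {V : Type*} (w : V × V → ℤ) : V → List V → ℤ
  | _, [] => 0
  | u, x :: xs => w (u, x) + walkWeight w x xs

/-- The number of negative-weight edges on a walk. -/
def countNeg {V : Type*} (w : V × V → ℤ) : V → List V → ℕ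
  | _, [] => 0
  | u, x :: xs => (if w (u, x) < 0 then 1 else 0) + countNeg w x xs

/-- `dist_G(u,v) ≤ r` : there exists a walk from `u` to `v` of weight at most `r`. -/
def DistLE {V : Type*} (E : Set (V × V)) (w : V × V → ℤ) (u v : V) (r : ℝ) : Prop :=
  ∃ p, IsWalk E u v p ∧ (walkWeight w u p : ℝ) ≤ r

/-- `Ball^in_G(v, r) = {u : dist_G(u,v) ≤ r}`. -/
def ballIn {V : Type*} (E : Set (V × V)) (w : V × V → ℤ) (v : V) (r : ℝ) : Set V :=
  {u | DistLE E w u v r}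

/-- `Ball^out_G(u, r) = {v : dist_G(u,v) ≤ r}`. -/
def ballOut {V : Type*} (E : Set (V × V)) (w : V × V → ℤ) (u : V) (r : ℝ) : Set V :=
  {v | DistLE E w u v r}

/-- There is a walk from `u` to `v`. -/
def Reach {V : Type*} (E : Set (V × V)) (u v : V) : Prop := ∃ p, IsWalk E u v p

/-- `u` and `v` lie in the same strongly connected component. -/
def SameSCC {V : Type*} (E : Set (V × V)) (u v : V) : Prop := Reach E u v ∧ Reach E v u

/-- `C` is a strongly connected component (an equivalence class of `SameSCC`). -/
def IsSCCOf {V : Type*} (E : Set (V × V)) (C : Set V) : Prop :=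
  ∃ v, C = {u | SameSCC E u v}

/-- `D` is the (attained) minimum weight of a walk from `u` to `v`. -/
def IsMinDist {V : Type*} (E : Set (V × V)) (w : V × V → ℤ) (u v : V) (D : ℤ) : Prop :=
  (∃ p, IsWalk E u v p ∧ walkWeight w u p = D) ∧
    ∀ p, IsWalk E u v p → D ≤ walkWeight w u p

open Finset Real

open Classical in
private lemma sum_prod_ite {V : Type} [Fintype V] (s : ℕ) (B : Set V) (a : ℝ) :
    (∑ f : Fin s → V, ∏ i, (if f i ∈ B then a else 1))
      = ((B.ncard : ℝ) * a + ((Fintype.card V : ℝ) - (B.ncard : ℝ))) ^ s := by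
  classical
  have h := Finset.prod_univ_sum (fun _ : Fin s => (univ : Finset V))
    (fun _ v => if v ∈ B then a else (1:ℝ))
  simp only [Fintype.piFinset_univ] at h
  rw [← h, Finset.prod_const, card_univ, Fintype.card_fin]
  congr 1
  rw [Finset.sum_ite, Finset.sum_const, Finset.sum_const]
  have h1 : univ.filter (fun v => v ∈ B) = B.toFinset := by ext x; simp
  have h2 : univ.filter (fun v => ¬ v ∈ B) = B.toFinsetᶜ := by ext x; simp
  rw [h1, h2, card_compl, ← Set.ncard_eq_toFinset_card']
  have hle : B.ncard ≤ Fintype.card V := by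
    rw [Set.ncard_eq_toFinset_card']; exact card_le_univ _
  simp only [nsmul_eq_mul, smul_eq_mul, mul_one]
  rw [Nat.cast_sub hle]

open Classical in
private lemma tail_generic {V : Type} [Fintype V] (s : ℕ) (B : Set V)
    (P : (Fin s → V) → Prop) (a t : ℝ) (ha : 0 < a)
    (hP : ∀ f : Fin s → V, P f →
      (1:ℝ) ≤ a ^ ((((univ.filter fun i => f i ∈ B).card : ℝ)) - t)) :
    ((univ.filter P).card : ℝ)
      ≤ a ^ (-t) * ((B.ncard : ℝ) * a + ((Fintype.card V : ℝ) - (B.ncard : ℝ))) ^ s := by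
  classical
  have key : ∀ f : Fin s → V,
      a ^ ((((univ.filter fun i => f i ∈ B).card : ℝ)) - t)
        = a ^ (-t) * ∏ i, (if f i ∈ B then a else 1) := by
    intro f
    have hprod : (∏ i, (if f i ∈ B then a else (1:ℝ)))
        = a ^ ((univ.filter fun i => f i ∈ B).card) := by
      rw [Finset.prod_ite (fun _ => a) (fun _ => (1:ℝ)), Finset.prod_const,
        Finset.prod_const, one_pow, mul_one]
    rw [hprod, sub_eq_add_neg, add_comm, Real.rpow_add ha, Real.rpow_natCast]
  calc ((univ.filter P).card : ℝ)
      = ∑ _f ∈ univ.filter P, (1:ℝ) := by simp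
    _ ≤ ∑ f ∈ univ.filter P,
          a ^ ((((univ.filter fun i => f i ∈ B).card : ℝ)) - t) := by
        refine Finset.sum_le_sum ?_
        intro f hf
        exact hP f (Finset.mem_filter.mp hf).2
    _ ≤ ∑ f : Fin s → V,
          a ^ ((((univ.filter fun i => f i ∈ B).card : ℝ)) - t) := by
        refine Finset.sum_le_sum_of_subset_of_nonneg (Finset.filter_subset _ _) ?_
        intro f _ _
        positivity
    _ = a ^ (-t) * ∑ f : Fin s → V, ∏ i, (if f i ∈ B then a else 1) := by
        simp_rw [key]; rw [Finset.mul_sum]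
    _ = _ := by rw [sum_prod_ite]
open Finset Real

private lemma num1 : (14/9 : ℝ) ^ (0.6 : ℝ) * 0.75 ≤ 0.981 := by
  have ha : (0:ℝ) ≤ (14/9:ℝ) ^ (0.6:ℝ) := Real.rpow_nonneg (by norm_num) _
  have h5 : ((14/9:ℝ) ^ (0.6:ℝ)) ^ (5:ℕ) = (14/9:ℝ) ^ (3:ℕ) := by
    rw [← Real.rpow_natCast ((14/9:ℝ) ^ (0.6:ℝ)) 5, ← Real.rpow_mul (by norm_num)]
    norm_num
  have hle : (14/9:ℝ) ^ (0.6:ℝ) ≤ 1.308 := by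
    refine le_of_pow_le_pow_left₀ (n := 5) (by norm_num) (by norm_num) ?_
    rw [h5]; norm_num
  linarith

private lemma num2 : (2/3 : ℝ) ^ (0.6 : ℝ) * 1.25 ≤ 0.981 := by
  have ha : (0:ℝ) ≤ (2/3:ℝ) ^ (0.6:ℝ) := Real.rpow_nonneg (by norm_num) _
  have h5 : ((2/3:ℝ) ^ (0.6:ℝ)) ^ (5:ℕ) = (2/3:ℝ) ^ (3:ℕ) := by
    rw [← Real.rpow_natCast ((2/3:ℝ) ^ (0.6:ℝ)) 5, ← Real.rpow_mul (by norm_num)]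
    norm_num
  have hle : (2/3:ℝ) ^ (0.6:ℝ) ≤ 0.7848 := by
    refine le_of_pow_le_pow_left₀ (n := 5) (by norm_num) (by norm_num) ?_
    rw [h5]; norm_num
  linarith
open Finset Real

private lemma rpow_neg_inv {x : ℝ} (hx : 0 < x) (y : ℝ) : x ^ (-y) = (x⁻¹) ^ y := by
  rw [Real.inv_rpow hx.le, Real.rpow_neg hx.le]

section AuxSampling
variable {V : Type} [Fintype V]


private lemma ncard_le_cardV (B : Set V) : (B.ncard : ℝ) ≤ (Fintype.card V : ℝ) := by
  classical
  have : B.ncard ≤ Fintype.card V := by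
    rw [Set.ncard_eq_toFinset_card']; exact card_le_univ _
  exact_mod_cast this

open Classical in
private lemma lower_tail (s : ℕ) (B : Set V)
    (hB : 0.7 * (Fintype.card V : ℝ) < (B.ncard : ℝ)) :
    ((univ.filter fun f : Fin s → V =>
        (((univ.filter fun i => f i ∈ B).card : ℝ) ≤ 0.6 * (s:ℝ))).card : ℝ)
      ≤ 0.981 ^ s * (Fintype.card V : ℝ) ^ s := by
  classical
  set N := (Fintype.card V : ℝ) with hN
  set b := (B.ncard : ℝ) with hb
  have hbN : b ≤ N := ncard_le_cardV B
  have hb0 : (0:ℝ) ≤ b := Nat.cast_nonneg _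
  have hN0 : (0:ℝ) ≤ N := Nat.cast_nonneg _
  have hP : ∀ f : Fin s → V,
      ((((univ.filter fun i => f i ∈ B).card : ℝ)) ≤ 0.6 * (s:ℝ)) →
      (1:ℝ) ≤ (9/14:ℝ) ^ ((((univ.filter fun i => f i ∈ B).card : ℝ)) - 0.6 * (s:ℝ)) := by
    intro f hf
    exact Real.one_le_rpow_of_pos_of_le_one_of_nonpos (by norm_num) (by norm_num)
      (by linarith)
  have h := tail_generic s B _ (9/14) (0.6 * (s:ℝ)) (by norm_num) hP
  have hpow : (9/14:ℝ) ^ (-(0.6 * (s:ℝ))) = ((14/9:ℝ) ^ (0.6:ℝ)) ^ s := by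
    rw [rpow_neg_inv (by norm_num), show ((9/14:ℝ)⁻¹) = (14/9:ℝ) by norm_num,
      ← Real.rpow_natCast ((14/9:ℝ) ^ (0.6:ℝ)) s, ← Real.rpow_mul (by norm_num)]
  have hX : b * (9/14) + (N - b) ≤ 0.75 * N := by linarith
  have hX0 : (0:ℝ) ≤ b * (9/14) + (N - b) := by linarith
  have hA0 : (0:ℝ) ≤ (14/9:ℝ) ^ (0.6:ℝ) := Real.rpow_nonneg (by norm_num) _
  calc ((univ.filter fun f : Fin s → V =>
        (((univ.filter fun i => f i ∈ B).card : ℝ) ≤ 0.6 * (s:ℝ))).card : ℝ)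
      ≤ (9/14:ℝ) ^ (-(0.6 * (s:ℝ))) * (b * (9/14) + (N - b)) ^ s := h
    _ ≤ ((14/9:ℝ) ^ (0.6:ℝ)) ^ s * (0.75 * N) ^ s := by
        rw [hpow]
        exact mul_le_mul_of_nonneg_left (pow_le_pow_left₀ hX0 hX s) (pow_nonneg hA0 s)
    _ = ((14/9:ℝ) ^ (0.6:ℝ) * 0.75) ^ s * N ^ s := by rw [mul_pow, mul_pow]; ring
    _ ≤ 0.981 ^ s * N ^ s := by
        refine mul_le_mul_of_nonneg_right (pow_le_pow_left₀ (by positivity) num1 s) ?_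
        positivity

open Classical in
private lemma upper_tail (s : ℕ) (B : Set V)
    (hB : (B.ncard : ℝ) ≤ 0.5 * (Fintype.card V : ℝ)) :
    ((univ.filter fun f : Fin s → V =>
        (0.6 * (s:ℝ) < ((univ.filter fun i => f i ∈ B).card : ℝ))).card : ℝ)
      ≤ 0.981 ^ s * (Fintype.card V : ℝ) ^ s := by
  classical
  set N := (Fintype.card V : ℝ) with hN
  set b := (B.ncard : ℝ) with hb
  have hbN : b ≤ N := ncard_le_cardV B
  have hb0 : (0:ℝ) ≤ b := Nat.cast_nonneg _
  have hN0 : (0:ℝ) ≤ N := Nat.cast_nonneg _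
  have hP : ∀ f : Fin s → V,
      (0.6 * (s:ℝ) < (((univ.filter fun i => f i ∈ B).card : ℝ))) →
      (1:ℝ) ≤ (3/2:ℝ) ^ ((((univ.filter fun i => f i ∈ B).card : ℝ)) - 0.6 * (s:ℝ)) := by
    intro f hf
    rw [show (1:ℝ) = (3/2:ℝ) ^ (0:ℝ) by rw [Real.rpow_zero]]
    exact (Real.rpow_le_rpow_left_iff (by norm_num)).mpr (by linarith)
  have h := tail_generic s B _ (3/2) (0.6 * (s:ℝ)) (by norm_num) hP
  have hpow : (3/2:ℝ) ^ (-(0.6 * (s:ℝ))) = ((2/3:ℝ) ^ (0.6:ℝ)) ^ s := by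
    rw [rpow_neg_inv (by norm_num), show ((3/2:ℝ)⁻¹) = (2/3:ℝ) by norm_num,
      ← Real.rpow_natCast ((2/3:ℝ) ^ (0.6:ℝ)) s, ← Real.rpow_mul (by norm_num)]
  have hX : b * (3/2) + (N - b) ≤ 1.25 * N := by linarith
  have hX0 : (0:ℝ) ≤ b * (3/2) + (N - b) := by linarith
  have hA0 : (0:ℝ) ≤ (2/3:ℝ) ^ (0.6:ℝ) := Real.rpow_nonneg (by norm_num) _
  calc ((univ.filter fun f : Fin s → V =>
        (0.6 * (s:ℝ) < ((univ.filter fun i => f i ∈ B).card : ℝ))).card : ℝ)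
      ≤ (3/2:ℝ) ^ (-(0.6 * (s:ℝ))) * (b * (3/2) + (N - b)) ^ s := h
    _ ≤ ((2/3:ℝ) ^ (0.6:ℝ)) ^ s * (1.25 * N) ^ s := by
        rw [hpow]
        exact mul_le_mul_of_nonneg_left (pow_le_pow_left₀ hX0 hX s) (pow_nonneg hA0 s)
    _ = ((2/3:ℝ) ^ (0.6:ℝ) * 1.25) ^ s * N ^ s := by rw [mul_pow, mul_pow]; ring
    _ ≤ 0.981 ^ s * N ^ s := by
        refine mul_le_mul_of_nonneg_right (pow_le_pow_left₀ (by positivity) num2 s) ?_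
        positivity


open Finset Real

open Classical in
private lemma key_bound (s : ℕ) (Bin Bout : Set V) :
    ((univ.filter fun f : Fin s → V => ¬ (
      ((((univ.filter (fun i : Fin s => f i ∈ Bin)).card : ℝ) ≤ 0.6 * (s : ℝ) →
          ((Bin.ncard : ℝ) ≤ 0.7 * (Fintype.card V : ℝ))) ∧
       ((((univ.filter (fun i : Fin s => f i ∈ Bout)).card : ℝ) ≤ 0.6 * (s : ℝ) →
          ((Bout.ncard : ℝ) ≤ 0.7 * (Fintype.card V : ℝ))) ∧
       ((0.6 * (s : ℝ) < (((univ.filter (fun i : Fin s => f i ∈ Bin)).card : ℝ)) ∧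
         0.6 * (s : ℝ) < (((univ.filter (fun i : Fin s => f i ∈ Bout)).card : ℝ))) →
        (0.5 * (Fintype.card V : ℝ) < ((Bin.ncard : ℝ)) ∧
         0.5 * (Fintype.card V : ℝ) < ((Bout.ncard : ℝ)))))))).card : ℝ)
      ≤ 4 * (0.981 ^ s * (Fintype.card V : ℝ) ^ s) := by
  classical
  set N := (Fintype.card V : ℝ) with hN
  set G1 := univ.filter (fun f : Fin s → V =>
    (((univ.filter fun i => f i ∈ Bin).card : ℝ) ≤ 0.6 * (s:ℝ)) ∧ 0.7 * N < (Bin.ncard : ℝ)) with hG1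
  set G2 := univ.filter (fun f : Fin s → V =>
    (((univ.filter fun i => f i ∈ Bout).card : ℝ) ≤ 0.6 * (s:ℝ)) ∧ 0.7 * N < (Bout.ncard : ℝ)) with hG2
  set G3 := univ.filter (fun f : Fin s → V =>
    (0.6 * (s:ℝ) < ((univ.filter fun i => f i ∈ Bin).card : ℝ)) ∧ (Bin.ncard : ℝ) ≤ 0.5 * N) with hG3
  set G4 := univ.filter (fun f : Fin s → V =>
    (0.6 * (s:ℝ) < ((univ.filter fun i => f i ∈ Bout).card : ℝ)) ∧ (Bout.ncard : ℝ) ≤ 0.5 * N) with hG4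
  have hρ : (0:ℝ) ≤ 0.981 ^ s * N ^ s := by positivity
  have hb1 : (G1.card : ℝ) ≤ 0.981 ^ s * N ^ s := by
    by_cases hc : 0.7 * N < (Bin.ncard : ℝ)
    · have hsub1 : G1 ⊆ univ.filter (fun f : Fin s → V =>
          ((univ.filter fun i => f i ∈ Bin).card : ℝ) ≤ 0.6 * (s:ℝ)) := by
        intro f hf
        simp only [hG1, Finset.mem_filter] at hf ⊢
        exact ⟨hf.1, hf.2.1⟩
      exact le_trans (Nat.cast_le.mpr (Finset.card_le_card hsub1)) (lower_tail s Bin hc)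
    · have : G1 = ∅ := Finset.filter_false_of_mem (fun f _ h => hc h.2)
      simp [this, hρ]
  have hb2 : (G2.card : ℝ) ≤ 0.981 ^ s * N ^ s := by
    by_cases hc : 0.7 * N < (Bout.ncard : ℝ)
    · have hsub1 : G2 ⊆ univ.filter (fun f : Fin s → V =>
          ((univ.filter fun i => f i ∈ Bout).card : ℝ) ≤ 0.6 * (s:ℝ)) := by
        intro f hf
        simp only [hG2, Finset.mem_filter] at hf ⊢
        exact ⟨hf.1, hf.2.1⟩
      exact le_trans (Nat.cast_le.mpr (Finset.card_le_card hsub1)) (lower_tail s Bout hc)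
    · have : G2 = ∅ := Finset.filter_false_of_mem (fun f _ h => hc h.2)
      simp [this, hρ]
  have hb3 : (G3.card : ℝ) ≤ 0.981 ^ s * N ^ s := by
    by_cases hc : (Bin.ncard : ℝ) ≤ 0.5 * N
    · have hsub1 : G3 ⊆ univ.filter (fun f : Fin s → V =>
          0.6 * (s:ℝ) < ((univ.filter fun i => f i ∈ Bin).card : ℝ)) := by
        intro f hf
        simp only [hG3, Finset.mem_filter] at hf ⊢
        exact ⟨hf.1, hf.2.1⟩
      exact le_trans (Nat.cast_le.mpr (Finset.card_le_card hsub1)) (upper_tail s Bin hc)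
    · have : G3 = ∅ := Finset.filter_false_of_mem (fun f _ h => hc h.2)
      simp [this, hρ]
  have hb4 : (G4.card : ℝ) ≤ 0.981 ^ s * N ^ s := by
    by_cases hc : (Bout.ncard : ℝ) ≤ 0.5 * N
    · have hsub1 : G4 ⊆ univ.filter (fun f : Fin s → V =>
          0.6 * (s:ℝ) < ((univ.filter fun i => f i ∈ Bout).card : ℝ)) := by
        intro f hf
        simp only [hG4, Finset.mem_filter] at hf ⊢
        exact ⟨hf.1, hf.2.1⟩
      exact le_trans (Nat.cast_le.mpr (Finset.card_le_card hsub1)) (upper_tail s Bout hc)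
    · have : G4 = ∅ := Finset.filter_false_of_mem (fun f _ h => hc h.2)
      simp [this, hρ]
  have hsub : (univ.filter fun f : Fin s → V => ¬ (
      ((((univ.filter (fun i : Fin s => f i ∈ Bin)).card : ℝ) ≤ 0.6 * (s : ℝ) →
          ((Bin.ncard : ℝ) ≤ 0.7 * N)) ∧
       ((((univ.filter (fun i : Fin s => f i ∈ Bout)).card : ℝ) ≤ 0.6 * (s : ℝ) →
          ((Bout.ncard : ℝ) ≤ 0.7 * N)) ∧
       ((0.6 * (s : ℝ) < (((univ.filter (fun i : Fin s => f i ∈ Bin)).card : ℝ)) ∧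
         0.6 * (s : ℝ) < (((univ.filter (fun i : Fin s => f i ∈ Bout)).card : ℝ))) →
        (0.5 * N < ((Bin.ncard : ℝ)) ∧
         0.5 * N < ((Bout.ncard : ℝ))))))))
      ⊆ (G1 ∪ G2) ∪ (G3 ∪ G4) := by
    intro f hf
    simp only [hG1, hG2, hG3, hG4, Finset.mem_union, Finset.mem_filter, Finset.mem_univ,
      true_and] at hf ⊢
    rcases not_and_or.mp hf with h | h
    · rw [Classical.not_imp] at h
      exact Or.inl (Or.inl ⟨h.1, not_le.mp h.2⟩)
    · rcases not_and_or.mp h with h | h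
      · rw [Classical.not_imp] at h
        exact Or.inl (Or.inr ⟨h.1, not_le.mp h.2⟩)
      · rw [Classical.not_imp] at h
        obtain ⟨⟨ha1, ha2⟩, hb⟩ := h
        rcases not_and_or.mp hb with hb | hb
        · exact Or.inr (Or.inl ⟨ha1, not_lt.mp hb⟩)
        · exact Or.inr (Or.inr ⟨ha2, not_lt.mp hb⟩)
  refine le_trans (Nat.cast_le.mpr (le_trans (Finset.card_le_card hsub)
    (le_trans (Finset.card_union_le _ _)
      (add_le_add (Finset.card_union_le _ _) (Finset.card_union_le _ _))))) ?_
  push_cast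
  linarith
open Finset Real

open Classical in
private lemma final_assembly (s n : ℕ) (Q : V → (Fin s → V) → Prop)
    [Nonempty V]
    (hn2 : 2 ≤ n) (hNn : Fintype.card V ≤ n)
    (hkey : ∀ v : V, ((univ.filter fun f : Fin s → V => ¬ Q v f).card : ℝ)
      ≤ 4 * (0.981 ^ s * (Fintype.card V : ℝ) ^ s))
    (hρ : (0.981 : ℝ) ^ s ≤ 1 / (n : ℝ) ^ 11) :
    1 - 1 / (n : ℝ) ^ 8 ≤
      (({f : Fin s → V | ∀ v : V, Q v f}.ncard : ℝ)) / (Fintype.card V : ℝ) ^ s := by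
  classical
  set N := (Fintype.card V : ℝ) with hNdef
  have hN1 : (1:ℝ) ≤ N := by
    rw [hNdef]; exact_mod_cast Fintype.card_pos
  have hNn' : N ≤ (n:ℝ) := by rw [hNdef]; exact_mod_cast hNn
  have hn2' : (2:ℝ) ≤ (n:ℝ) := by exact_mod_cast hn2
  have hn0 : (0:ℝ) < (n:ℝ) := by linarith
  have hNs : (0:ℝ) < N ^ s := by positivity
  have hcount : ((univ.filter fun f : Fin s → V => ∀ v : V, Q v f).card : ℝ)
      + ((univ.filter fun f : Fin s → V => ¬ ∀ v : V, Q v f).card : ℝ) = N ^ s := by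
    rw [← Nat.cast_add, Finset.card_filter_add_card_filter_not, Finset.card_univ]
    rw [Fintype.card_fun, Fintype.card_fin]
    push_cast
    rfl
  have hset : (({f : Fin s → V | ∀ v : V, Q v f}.ncard : ℝ))
      = ((univ.filter fun f : Fin s → V => ∀ v : V, Q v f).card : ℝ) := by
    rw [Set.ncard_eq_toFinset_card', Set.toFinset_setOf]
  have hbad : ((univ.filter fun f : Fin s → V => ¬ ∀ v : V, Q v f).card : ℝ)
      ≤ N * (4 * (0.981 ^ s * N ^ s)) := by
    have hsub : (univ.filter fun f : Fin s → V => ¬ ∀ v : V, Q v f)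
        ⊆ univ.biUnion (fun v : V => univ.filter fun f : Fin s → V => ¬ Q v f) := by
      intro f hf
      simp only [Finset.mem_filter, Finset.mem_biUnion, Finset.mem_univ, true_and] at hf ⊢
      push_neg at hf
      exact hf
    calc ((univ.filter fun f : Fin s → V => ¬ ∀ v : V, Q v f).card : ℝ)
        ≤ (((univ.biUnion (fun v : V => univ.filter fun f : Fin s → V => ¬ Q v f)).card : ℕ) : ℝ) :=
          Nat.cast_le.mpr (Finset.card_le_card hsub)
      _ ≤ ((∑ v : V, (univ.filter fun f : Fin s → V => ¬ Q v f).card : ℕ) : ℝ) :=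
          Nat.cast_le.mpr (Finset.card_biUnion_le)
      _ = ∑ v : V, ((univ.filter fun f : Fin s → V => ¬ Q v f).card : ℝ) := by push_cast; rfl
      _ ≤ ∑ _v : V, 4 * (0.981 ^ s * N ^ s) := Finset.sum_le_sum (fun v _ => hkey v)
      _ = N * (4 * (0.981 ^ s * N ^ s)) := by
          rw [Finset.sum_const, Finset.card_univ, nsmul_eq_mul]
  have h4 : (4:ℝ) ≤ (n:ℝ) ^ 2 := by nlinarith
  have e2 : 4 * (n:ℝ) * (1 / (n:ℝ) ^ 11) ≤ 1 / (n:ℝ) ^ 8 := by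
    rw [show (4:ℝ) * (n:ℝ) * (1 / (n:ℝ) ^ 11) = 4 / (n:ℝ) ^ 10 by field_simp]
    rw [div_le_div_iff₀ (by positivity) (by positivity)]
    nlinarith [pow_pos hn0 8, pow_pos hn0 10]
  have e1 : 4 * N * (0.981:ℝ) ^ s ≤ 4 * (n:ℝ) * (1 / (n:ℝ) ^ 11) := by
    refine mul_le_mul (by linarith) hρ (by positivity) (by positivity)
  have hfinal : N * (4 * (0.981 ^ s * N ^ s)) ≤ (1 / (n:ℝ) ^ 8) * N ^ s := by
    have : N * (4 * (0.981 ^ s * N ^ s)) = (4 * N * (0.981:ℝ) ^ s) * N ^ s := by ring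
    rw [this]
    exact mul_le_mul_of_nonneg_right (le_trans e1 e2) hNs.le
  rw [le_div_iff₀ hNs, hset]
  have hexp : (1 - 1 / (n:ℝ) ^ 8) * N ^ s = N ^ s - (1 / (n:ℝ) ^ 8) * N ^ s := by ring
  linarith
end AuxSampling

set_option maxHeartbeats 2000000 in
open Classical in
/-- Sampling `s = ⌈c log₂ n⌉` independent uniform vertices (modelled by the
uniform distribution on `Fin s → V`), with probability at least `1 - n⁻⁸` the sample counts
correctly classify every vertex as light/heavy simultaneously. -/
theorem sampling_classifies_balls :
    ∃ c₀ : ℝ, 1 ≤ c₀ ∧ ∀ c : ℝ, c₀ ≤ c →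
      ∀ (V : Type) [Fintype V] [Nonempty V] (E : Set (V × V)) (w : V × V → ℤ),
        (∀ e ∈ E, 0 ≤ w e) →
        ∀ n : ℕ, max (Fintype.card V) 2 ≤ n →
        ∀ d : ℕ, 0 < d →
        ∀ s : ℕ, s = ⌈c * Real.logb 2 (n : ℝ)⌉₊ →
        1 - 1 / (n : ℝ) ^ 8 ≤
          ((Set.ncard {f : Fin s → V | ∀ v : V,
            ((((Finset.univ.filter
                  (fun i : Fin s => f i ∈ ballIn E w v ((d : ℝ) / 4))).card : ℝ)
                  ≤ 0.6 * (s : ℝ) →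
                ((ballIn E w v ((d : ℝ) / 4)).ncard : ℝ) ≤ 0.7 * (Fintype.card V : ℝ)) ∧
             (((Finset.univ.filter
                  (fun i : Fin s => f i ∈ ballOut E w v ((d : ℝ) / 4))).card : ℝ)
                  ≤ 0.6 * (s : ℝ) →
                ((ballOut E w v ((d : ℝ) / 4)).ncard : ℝ) ≤ 0.7 * (Fintype.card V : ℝ)) ∧
             ((0.6 * (s : ℝ) < ((Finset.univ.filter
                  (fun i : Fin s => f i ∈ ballIn E w v ((d : ℝ) / 4))).card : ℝ) ∧
               0.6 * (s : ℝ) < ((Finset.univ.filter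
                  (fun i : Fin s => f i ∈ ballOut E w v ((d : ℝ) / 4))).card : ℝ)) →
              (0.5 * (Fintype.card V : ℝ) < ((ballIn E w v ((d : ℝ) / 4)).ncard : ℝ) ∧
               0.5 * (Fintype.card V : ℝ) < ((ballOut E w v ((d : ℝ) / 4)).ncard : ℝ))))} : ℝ))
            / (Fintype.card V : ℝ) ^ s := by
  classical
  refine ⟨1000, by norm_num, ?_⟩
  intro c hc V _ _ E w _ n hn d _ s hs
  have hNn : Fintype.card V ≤ n := le_trans (le_max_left _ _) hn
  have hn2 : 2 ≤ n := le_trans (le_max_right _ _) hn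
  have hn1R : (1:ℝ) ≤ (n:ℝ) := by exact_mod_cast le_trans (by norm_num) hn2
  have hn0 : (0:ℝ) < (n:ℝ) := by linarith
  have hlogn : 0 ≤ Real.log n := Real.log_nonneg hn1R
  have hlog2p : 0 < Real.log 2 := Real.log_pos (by norm_num)
  have hlog2le : Real.log 2 ≤ 1 := by
    have := Real.add_one_le_exp (1:ℝ)
    have h2e : (2:ℝ) ≤ Real.exp 1 := by linarith
    calc Real.log 2 ≤ Real.log (Real.exp 1) := Real.log_le_log (by norm_num) h2e
      _ = 1 := Real.log_exp 1
  have hlogb : Real.log n ≤ Real.logb 2 n := by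
    rw [Real.logb, le_div_iff₀ hlog2p]
    nlinarith
  have hlogb0 : 0 ≤ Real.logb 2 n := le_trans hlogn hlogb
  have hsge : 1000 * Real.log n ≤ (s:ℝ) := by
    have h1 : c * Real.logb 2 n ≤ (s:ℝ) := by
      rw [hs]; exact Nat.le_ceil _
    have h2 : 1000 * Real.logb 2 n ≤ c * Real.logb 2 n :=
      mul_le_mul_of_nonneg_right hc hlogb0
    nlinarith
  have hρ : (0.981:ℝ) ^ s ≤ 1 / (n:ℝ) ^ 11 := by
    have h981 : (0.981:ℝ) ≤ Real.exp (-(0.019)) := by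
      have := Real.add_one_le_exp (-(0.019:ℝ)); linarith
    calc (0.981:ℝ) ^ s ≤ (Real.exp (-(0.019))) ^ s :=
          pow_le_pow_left₀ (by norm_num) h981 s
      _ = Real.exp ((s:ℝ) * (-(0.019))) := (Real.exp_nat_mul _ s).symm
      _ ≤ Real.exp (-(Real.log ((n:ℝ) ^ 11))) := by
          apply Real.exp_le_exp.mpr
          rw [Real.log_pow]
          push_cast
          nlinarith
      _ = 1 / (n:ℝ) ^ 11 := by
          rw [Real.exp_neg, Real.exp_log (by positivity), one_div]
  refine final_assembly s n _ hn2 hNn (fun v => ?_) hρ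
  have hKB := key_bound s (ballIn E w v ((d : ℝ) / 4)) (ballOut E w v ((d : ℝ) / 4))
  convert hKB using 4
end

section
/- There is an absolute constant c₀ ≥ 1 with the following property. Let c ≥ c₀, let G = (V, E, w) be a weighted directed graph with nonnegative integer edge weights, let n ≥ max(|V|, 2) and let d be a positive integer, and set p = min(c·log₂ n / d, 1) and t = ⌊d/4⌋. Let v₁, …, v_ℓ ∈ V be distinct vertices satisfying |Ball^in_G(v_i, d/4)| ≤ 0.7·|V| for every i, and let d₁, …, d_ℓ be independent random variables, each with distribution GE[p]_{≤t}. Define k to be the least index i ∈ {1,…,ℓ} such that |⋃_{j ≤ i} Ball^in_G(v_j, d_j)| > 0.1·|V|, and k = ℓ if no such index exists, and set A = ⋃_{j ≤ k} Ball^in_G(v_j, d_j). Then for every edge e ∈ E, Pr[e ∈ δ⁻(A)] ≤ c²·w(e)·log₂ n / d. -/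
/-!
Fix the edge `e = (x, y)`. If `e` enters `A`, let `j` be the first center whose ball contains `y`:
then `y ∉ Ball(v_i, d_i)` for `i < j`, `y ∈ Ball(v_j, d_j)` but `x ∉ Ball(v_j, d_j)`. Since
`dist(x, v_j) ≤ w(e) + dist(y, v_j)`, the radius `d_j` lies in a window of `w(e)` values starting at
the least radius `a_j` that catches `y`. For the truncated geometric law such a window has mass at
most `w(e) · p · (Pr[d_j ≥ a_j] + τ)` with `τ = (1-p)^(t+1) / (1 - (1-p)^(t+1))`, so conditioning on
`d_1` and inducting on `ℓ` bounds the probability by `w(e) · p · (1 + ℓ τ)`. The choice of `p` and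
`t` makes `(1-p)^(t+1) ≤ n⁻²`, hence `ℓ τ ≤ 1`, and `2 w(e) p ≤ c² w(e) log₂ n / d` once `c ≥ 8`.
-/
open Real

/-- The union of the in-balls of the first `i` centers (`0`-indexed: centers `v_j` for `j < i`),
with radius `rad j` around center `v j`. -/
def prefixUnion {V : Type*} (E : Set (V × V)) (w : V × V → ℤ) {l : ℕ} (v : Fin l → V)
    (rad : Fin l → ℕ) (i : ℕ) : Set V :=
  ⋃ (j : Fin l) (_ : (j : ℕ) < i), ballIn E w (v j) ((rad j : ℝ))

/-- `k` is the least index `i ∈ {1,…,l}` such that the union of the first `i` balls has more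
than `0.1` times `card` vertices, and `k = l` if no such index exists. -/
def KSpec {V : Type*} (E : Set (V × V)) (w : V × V → ℤ) {l : ℕ} (v : Fin l → V)
    (rad : Fin l → ℕ) (card : ℕ) (k : ℕ) : Prop :=
  (1 ≤ k ∧ k ≤ l ∧ 0.1 * (card : ℝ) < ((prefixUnion E w v rad k).ncard : ℝ) ∧
    ∀ i, 1 ≤ i → i < k → ¬(0.1 * (card : ℝ) < ((prefixUnion E w v rad i).ncard : ℝ)))
  ∨ (k = l ∧ ∀ i, 1 ≤ i → i ≤ l → ¬(0.1 * (card : ℝ) < ((prefixUnion E w v rad i).ncard : ℝ)))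

namespace FindBalancedSet

open Finset

section FirstHit

variable {α : Type*}

def FirstHitIn {l : ℕ} (H B : Fin l → Finset α) (f : Fin l → α) : Prop :=
  ∃ j, (∀ i < j, f i ∉ H i) ∧ f j ∈ B j

instance [DecidableEq α] {l : ℕ} (H B : Fin l → Finset α) : DecidablePred (FirstHitIn H B) :=
  fun _ => inferInstanceAs (Decidable (∃ _, _))

theorem firstHitIn_cons_iff {l : ℕ} (H B : Fin (l + 1) → Finset α) (a : α) (f : Fin l → α) :
    FirstHitIn H B (Fin.cons a f : Fin (l + 1) → α) ↔
      a ∈ B 0 ∨ (a ∉ H 0 ∧ FirstHitIn (fun i => H i.succ) (fun i => B i.succ) f) := by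
  constructor
  · rintro ⟨j, hbefore, hj⟩
    induction j using Fin.cases with
    | zero => exact Or.inl hj
    | succ j =>
      exact Or.inr ⟨hbefore 0 (Fin.succ_pos j),
        j, fun i hi => by simpa using hbefore i.succ (Fin.succ_lt_succ_iff.2 hi), by simpa using hj⟩
  · rintro (ha | ⟨ha, j, hbefore, hj⟩)
    · exact ⟨0, fun i hi => absurd hi (Fin.not_lt_zero i), ha⟩
    · refine ⟨j.succ, fun i hi => ?_, by simpa using hj⟩
      induction i using Fin.cases with
      | zero => simpa using ha
      | succ i => simpa using hbefore i (Fin.succ_lt_succ_iff.1 hi)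

variable [Fintype α]

theorem sum_prod_eq_one {l : ℕ} (g : Fin l → α → ℝ) (hg : ∀ i, ∑ a, g i a = 1) :
    ∑ f : Fin l → α, ∏ i, g i (f i) = 1 := by
  rw [← Fintype.prod_sum]
  exact prod_eq_one fun i _ => hg i

variable [DecidableEq α]

theorem sum_prod_filter_firstHitIn_succ_le {l : ℕ} (g : Fin (l + 1) → α → ℝ)
    (hg0 : ∀ i a, 0 ≤ g i a) (hg1 : ∀ i, ∑ a, g i a = 1) (H B : Fin (l + 1) → Finset α) :
    ∑ f ∈ univ.filter (FirstHitIn H B), ∏ i, g i (f i) ≤ ∑ a ∈ B 0, g 0 a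
      + (∑ a ∈ (H 0)ᶜ, g 0 a) * ∑ f ∈ univ.filter (FirstHitIn (fun i => H i.succ)
          (fun i => B i.succ)), ∏ i, g i.succ (f i) := by
  set P : (Fin l → α) → ℝ := fun f => ∏ i, g i.succ (f i)
  set s₁ := B 0 ×ˢ (univ : Finset (Fin l → α))
  set s₂ := (H 0)ᶜ ×ˢ univ.filter (FirstHitIn (fun i => H i.succ) (fun i => B i.succ))
  have hnonneg : ∀ x : α × (Fin l → α), 0 ≤ g 0 x.1 * P x.2 :=
    fun x => mul_nonneg (hg0 0 x.1) (prod_nonneg fun i _ => hg0 _ _)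
  have hsplit : ∑ f ∈ univ.filter (FirstHitIn H B), ∏ i, g i (f i) =
      ∑ x ∈ s₁ ∪ s₂, g 0 x.1 * P x.2 := by
    refine (sum_equiv (Fin.consEquiv fun _ => α) (fun x => ?_) (fun x _ => ?_)).symm
    · rcases x with ⟨a, f⟩
      simp only [s₁, s₂, mem_union, mem_product, mem_compl, mem_filter, mem_univ, and_true,
        true_and]
      exact (firstHitIn_cons_iff H B a f).symm
    · simp [Fin.prod_univ_succ, P]
  have hprod : ∀ (s : Finset α) (T : Finset (Fin l → α)),
      ∑ x ∈ s ×ˢ T, g 0 x.1 * P x.2 = (∑ a ∈ s, g 0 a) * ∑ f ∈ T, P f :=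
    fun s T => by rw [sum_product, sum_mul_sum]
  have hunion := sum_union_inter (s₁ := s₁) (s₂ := s₂) (f := fun x => g 0 x.1 * P x.2)
  have hinter := sum_nonneg fun x (_ : x ∈ s₁ ∩ s₂) => hnonneg x
  rw [hprod, hprod, sum_prod_eq_one _ fun i => hg1 i.succ, mul_one] at hunion
  linarith

theorem sum_prod_filter_firstHitIn_le {l : ℕ} (g : Fin l → α → ℝ) (hg0 : ∀ i a, 0 ≤ g i a)
    (hg1 : ∀ i, ∑ a, g i a = 1) (H B : Fin l → Finset α) {ε τ : ℝ} (hε : 0 ≤ ε) (hτ : 0 ≤ τ)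
    (hB : ∀ j, ∑ a ∈ B j, g j a ≤ ε * (∑ a ∈ H j, g j a + τ)) :
    ∑ f ∈ univ.filter (FirstHitIn H B), ∏ i, g i (f i) ≤ ε * (1 + l * τ) := by
  induction l with
  | zero =>
    have hempty : univ.filter (FirstHitIn H B) = ∅ :=
      filter_false_of_mem fun f _ ⟨j, _⟩ => j.elim0
    rw [hempty, sum_empty]
    simpa using hε
  | succ l ih =>
    set h := ∑ a ∈ H 0, g 0 a
    have hcompl : ∑ a ∈ (H 0)ᶜ, g 0 a = 1 - h := by
      rw [← hg1 0, ← sum_add_sum_compl (H 0)]; ring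
    have hh0 : 0 ≤ h := sum_nonneg fun a _ => hg0 0 a
    have hh1 : h ≤ 1 := by
      linarith [sum_nonneg fun a (_ : a ∈ (H 0)ᶜ) => hg0 0 a]
    have htail := ih (fun i => g i.succ) (fun i => hg0 i.succ) (fun i => hg1 i.succ)
      (fun i => H i.succ) (fun i => B i.succ) fun j => hB j.succ
    calc _ ≤ ε * (h + τ) + (1 - h) * (ε * (1 + l * τ)) := by
          refine (sum_prod_filter_firstHitIn_succ_le g hg0 hg1 H B).trans ?_
          rw [hcompl]
          exact add_le_add (hB 0) (mul_le_mul_of_nonneg_left htail (by linarith))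
      _ ≤ ε * (1 + (l + 1 : ℕ) * τ) := by
          push_cast
          nlinarith [mul_nonneg (mul_nonneg hε hh0) (mul_nonneg (Nat.cast_nonneg l) hτ)]

end FirstHit

section TruncGeom

noncomputable def truncGeom (p : ℝ) (t k : ℕ) : ℝ := (1 - p) ^ k * p / (1 - (1 - p) ^ (t + 1))

noncomputable def truncGeomTail (p : ℝ) (t : ℕ) : ℝ := (1 - p) ^ (t + 1) / (1 - (1 - p) ^ (t + 1))

variable {p : ℝ} (t : ℕ)

theorem one_sub_one_sub_pow_pos (hp0 : 0 < p) (hp1 : p ≤ 1) : 0 < 1 - (1 - p) ^ (t + 1) := by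
  have : (1 - p) ^ (t + 1) < 1 := pow_lt_one₀ (by linarith) (by linarith) t.succ_ne_zero
  linarith

theorem truncGeom_nonneg (hp0 : 0 < p) (hp1 : p ≤ 1) (k : ℕ) : 0 ≤ truncGeom p t k :=
  div_nonneg (mul_nonneg (pow_nonneg (by linarith) k) hp0.le)
    (one_sub_one_sub_pow_pos t hp0 hp1).le

theorem truncGeomTail_nonneg (hp0 : 0 < p) (hp1 : p ≤ 1) : 0 ≤ truncGeomTail p t :=
  div_nonneg (pow_nonneg (by linarith) _) (one_sub_one_sub_pow_pos t hp0 hp1).le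

theorem truncGeom_antitone (hp0 : 0 < p) (hp1 : p ≤ 1) : Antitone (truncGeom p t) :=
  fun _ _ hab => div_le_div_of_nonneg_right
    (mul_le_mul_of_nonneg_right (pow_le_pow_of_le_one (by linarith) (by linarith) hab) hp0.le)
    (one_sub_one_sub_pow_pos t hp0 hp1).le

theorem sum_Ico_truncGeom {a : ℕ} (ha : a ≤ t + 1) :
    ∑ k ∈ Ico a (t + 1), truncGeom p t k =
      ((1 - p) ^ a - (1 - p) ^ (t + 1)) / (1 - (1 - p) ^ (t + 1)) := by
  have hgeom := geom_sum_Ico_mul_neg (1 - p) ha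
  rw [sub_sub_cancel] at hgeom
  simp only [truncGeom, ← sum_div, ← sum_mul, hgeom]

theorem sum_fin_filter_le_eq_sum_Ico {M : Type*} [AddCommMonoid M] (f : ℕ → M) (a n : ℕ) :
    ∑ k ∈ univ.filter (fun k : Fin n => a ≤ (k : ℕ)), f k = ∑ k ∈ Ico a n, f k := by
  rw [sum_filter, Fin.sum_univ_eq_sum_range (fun k => if a ≤ k then f k else 0), ← sum_filter,
    range_eq_Ico, Ico_filter_le, Nat.zero_max]

theorem sum_truncGeom_eq_one (hp0 : 0 < p) (hp1 : p ≤ 1) :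
    ∑ k : Fin (t + 1), truncGeom p t k = 1 := by
  have h := sum_fin_filter_le_eq_sum_Ico (truncGeom p t) 0 (t + 1)
  simp only [zero_le, filter_true] at h
  rw [h, sum_Ico_truncGeom t (Nat.zero_le _), pow_zero,
    div_self (one_sub_one_sub_pow_pos t hp0 hp1).ne']

theorem sum_truncGeom_window_le (hp0 : 0 < p) (hp1 : p ≤ 1) (a W : ℕ) :
    ∑ k ∈ univ.filter (fun k : Fin (t + 1) => a ≤ (k : ℕ) ∧ (k : ℕ) < a + W), truncGeom p t k
      ≤ W * p * (∑ k ∈ univ.filter (fun k : Fin (t + 1) => a ≤ (k : ℕ)), truncGeom p t k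
        + truncGeomTail p t) := by
  by_cases ha : a ≤ t
  · have hcard : #(univ.filter fun k : Fin (t + 1) => a ≤ (k : ℕ) ∧ (k : ℕ) < a + W) ≤ W := by
      refine (card_le_card_of_injOn (t := Ico a (a + W)) (fun k : Fin (t + 1) => (k : ℕ))
        (fun k hk => ?_) fun _ _ _ _ h => Fin.ext h).trans (by simp)
      simpa using hk
    have hmass : truncGeom p t a =
        p * (∑ k ∈ Ico a (t + 1), truncGeom p t k + truncGeomTail p t) := by
      have hZ := (one_sub_one_sub_pow_pos t hp0 hp1).ne'
      rw [sum_Ico_truncGeom t (by omega), truncGeom, truncGeomTail]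
      field_simp
      ring
    calc _ ≤ #(univ.filter fun k : Fin (t + 1) => a ≤ (k : ℕ) ∧ (k : ℕ) < a + W)
          • truncGeom p t a :=
          sum_le_card_nsmul _ _ _ fun k hk => truncGeom_antitone t hp0 hp1 (mem_filter.1 hk).2.1
      _ ≤ W * truncGeom p t a := by
          rw [nsmul_eq_mul]
          have := truncGeom_nonneg t hp0 hp1 a
          gcongr
      _ = _ := by rw [hmass, sum_fin_filter_le_eq_sum_Ico]; ring
  · have hempty : univ.filter (fun k : Fin (t + 1) => a ≤ (k : ℕ) ∧ (k : ℕ) < a + W) = ∅ :=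
      filter_false_of_mem fun k _ hk => ha (hk.1.trans (Nat.le_of_lt_succ k.isLt))
    rw [hempty, sum_empty]
    exact mul_nonneg (by positivity)
      (add_nonneg (sum_nonneg fun k _ => truncGeom_nonneg t hp0 hp1 k)
        (truncGeomTail_nonneg t hp0 hp1))

theorem sum_truncGeom_filter_le_of_monotone (hp0 : 0 < p) (hp1 : p ≤ 1) {S T : ℕ → Prop}
    [DecidablePred S] [DecidablePred T] (hS : Monotone S) (hT : Monotone T) {W : ℕ}
    (hST : ∀ r, S r → T (r + W)) :
    ∑ k ∈ univ.filter (fun k : Fin (t + 1) => S k ∧ ¬T k), truncGeom p t k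
      ≤ W * p * (∑ k ∈ univ.filter (fun k : Fin (t + 1) => S k), truncGeom p t k
        + truncGeomTail p t) := by
  by_cases hex : ∃ r, S r
  · have hSiff : ∀ r, S r ↔ Nat.find hex ≤ r :=
      fun r => ⟨Nat.find_min' hex, fun h => hS h (Nat.find_spec hex)⟩
    have hcut : ∀ r, S r → ¬T r → r < Nat.find hex + W := fun r hr hTr => by
      by_contra! h
      exact hTr (hT h (hST _ (Nat.find_spec hex)))
    calc _ ≤ ∑ k ∈ univ.filter (fun k : Fin (t + 1) =>
            Nat.find hex ≤ (k : ℕ) ∧ (k : ℕ) < Nat.find hex + W), truncGeom p t k :=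
          sum_le_sum_of_subset_of_nonneg
            (fun k hk => by
              simp only [mem_filter, mem_univ, true_and] at hk ⊢
              exact ⟨(hSiff k).1 hk.1, hcut k hk.1 hk.2⟩)
            fun k _ _ => truncGeom_nonneg t hp0 hp1 k
      _ ≤ _ := sum_truncGeom_window_le t hp0 hp1 _ W
      _ = _ := by simp only [hSiff]
  · push Not at hex
    have hempty : univ.filter (fun k : Fin (t + 1) => S k ∧ ¬T k) = ∅ :=
      filter_false_of_mem fun k _ hk => hex k hk.1
    rw [hempty, sum_empty]
    exact mul_nonneg (by positivity)
      (add_nonneg (sum_nonneg fun k _ => truncGeom_nonneg t hp0 hp1 k)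
        (truncGeomTail_nonneg t hp0 hp1))

theorem natCast_mul_truncGeomTail_le_one (hp0 : 0 < p) (hp1 : p ≤ 1) {l n : ℕ} (hn : 2 ≤ n)
    (hl : l ≤ n) (hq : (1 - p) ^ (t + 1) ≤ ((n : ℝ) ^ 2)⁻¹) :
    (l : ℝ) * truncGeomTail p t ≤ 1 := by
  have hZ := one_sub_one_sub_pow_pos t hp0 hp1
  have hq0 : 0 ≤ (1 - p) ^ (t + 1) := pow_nonneg (by linarith) _
  have hn2 : (2 : ℝ) ≤ n := by exact_mod_cast hn
  have hlR : (l : ℝ) ≤ n := by exact_mod_cast hl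
  have hqn : (1 - p) ^ (t + 1) * (n : ℝ) ^ 2 ≤ 1 := by
    rwa [← le_inv_mul_iff₀' (by positivity), mul_one]
  rw [truncGeomTail, mul_div_assoc', div_le_one hZ]
  nlinarith

end TruncGeom

theorem one_sub_min_pow_le_inv_sq {c : ℝ} (hc : 8 ≤ c) {n d : ℕ} (hn : 2 ≤ n) (hd : 0 < d) :
    (1 - min (c * logb 2 n / d) 1) ^ (d / 4 + 1) ≤ ((n : ℝ) ^ 2)⁻¹ := by
  rcases le_total 1 (c * logb 2 n / d) with h | h
  · rw [min_eq_right h, sub_self, zero_pow (Nat.succ_ne_zero _)]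
    positivity
  rw [min_eq_left h]
  set p := c * logb 2 n / d
  have hn2 : (2 : ℝ) ≤ n := by exact_mod_cast hn
  have hdR : (0 : ℝ) < d := by exact_mod_cast hd
  have hlog : 0 ≤ Real.log n := Real.log_nonneg (by linarith)
  have hlog_le_logb : Real.log n ≤ logb 2 n := by
    rw [logb, le_div_iff₀ (Real.log_pos one_lt_two)]
    nlinarith [Real.log_two_lt_d9]
  have hp0 : 0 ≤ p := div_nonneg (mul_nonneg (by linarith) (by linarith)) hdR.le
  have hdt : (d : ℝ) / 4 ≤ (d / 4 + 1 : ℕ) := by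
    have : d < (d / 4 + 1) * 4 := by omega
    rw [div_le_iff₀ (by norm_num)]
    exact_mod_cast this.le
  have hexp : 2 * Real.log n ≤ p * (d / 4 + 1 : ℕ) :=
    calc 2 * Real.log n ≤ c * logb 2 n / 4 := by nlinarith
      _ = p * (d / 4) := by simp only [p]; field_simp
      _ ≤ p * (d / 4 + 1 : ℕ) := mul_le_mul_of_nonneg_left hdt hp0
  calc (1 - p) ^ (d / 4 + 1) ≤ Real.exp (-p) ^ (d / 4 + 1) :=
        pow_le_pow_left₀ (by linarith) (Real.one_sub_le_exp_neg p) _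
    _ = Real.exp (-(p * (d / 4 + 1 : ℕ))) := by rw [← Real.exp_nat_mul]; ring_nf
    _ ≤ Real.exp (-(2 * Real.log n)) := Real.exp_le_exp.2 (by linarith)
    _ = ((n : ℝ) ^ 2)⁻¹ := by
        rw [Real.exp_neg, show 2 * Real.log n = Real.log ((n : ℝ) ^ 2) by simp [Real.log_pow],
          Real.exp_log (by positivity)]

section Balls

variable {V : Type*} (E : Set (V × V)) (w : V × V → ℤ)

theorem ballIn_mono (v : V) {r s : ℝ} (h : r ≤ s) : ballIn E w v r ⊆ ballIn E w v s :=
  fun _ ⟨q, hq, hle⟩ => ⟨q, hq, hle.trans h⟩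

theorem mem_ballIn_add_of_mem_ballIn {x y v : V} {r : ℝ} (he : (x, y) ∈ E)
    (hy : y ∈ ballIn E w v r) : x ∈ ballIn E w v (r + w (x, y)) := by
  obtain ⟨q, hq, hle⟩ := hy
  refine ⟨y :: q, ⟨he, hq⟩, ?_⟩
  simp only [walkWeight, Int.cast_add]
  linarith

end Balls

theorem exists_first_of_mem_prefix_iUnion {V : Type*} {l k : ℕ} {S : Fin l → Set V} {x y : V}
    (hx : x ∉ ⋃ (j : Fin l) (_ : (j : ℕ) < k), S j)
    (hy : y ∈ ⋃ (j : Fin l) (_ : (j : ℕ) < k), S j) :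
    ∃ j, (∀ i < j, y ∉ S i) ∧ y ∈ S j ∧ x ∉ S j := by
  classical
  simp only [Set.mem_iUnion] at hx hy
  obtain ⟨j₀, hj₀k, hj₀⟩ := hy
  obtain ⟨j, hj, hmin⟩ :=
    (univ.filter fun j => y ∈ S j).exists_min_image id ⟨j₀, by simpa using hj₀⟩
  rw [mem_filter] at hj
  refine ⟨j, fun i hij hi => ?_, hj.2, fun hxj => hx ⟨j, ?_, hxj⟩⟩
  · exact absurd (hmin i (by simpa using hi)) (not_le.2 hij)
  · exact Nat.lt_of_le_of_lt (hmin j₀ (by simpa using hj₀)) hj₀k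

section Radii

variable {V : Type*} (E : Set (V × V)) (w : V × V → ℤ) (t : ℕ)

open Classical in
noncomputable def hitRadii (u y : V) : Finset (Fin (t + 1)) :=
  univ.filter fun r => y ∈ ballIn E w u (r : ℕ)

open Classical in
noncomputable def cutRadii (u x y : V) : Finset (Fin (t + 1)) :=
  univ.filter fun r => y ∈ ballIn E w u (r : ℕ) ∧ x ∉ ballIn E w u (r : ℕ)

theorem firstHitIn_of_not_mem_of_mem_prefixUnion {l k : ℕ} {v : Fin l → V}
    {f : Fin l → Fin (t + 1)} {x y : V} (hx : x ∉ prefixUnion E w v (fun j => f j) k)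
    (hy : y ∈ prefixUnion E w v (fun j => f j) k) :
    FirstHitIn (fun j => hitRadii E w t (v j) y) (fun j => cutRadii E w t (v j) x y) f := by
  obtain ⟨j, hbefore, hyj, hxj⟩ := exists_first_of_mem_prefix_iUnion hx hy
  exact ⟨j, fun i hi => by simpa [hitRadii] using hbefore i hi,
    by simpa [cutRadii] using ⟨hyj, hxj⟩⟩

theorem sum_cutRadii_truncGeom_le {p : ℝ} (hp0 : 0 < p) (hp1 : p ≤ 1) {u x y : V}
    (he : (x, y) ∈ E) (hw : 0 ≤ w (x, y)) :
    ∑ r ∈ cutRadii E w t u x y, truncGeom p t r ≤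
      w (x, y) * p * (∑ r ∈ hitRadii E w t u y, truncGeom p t r + truncGeomTail p t) := by
  classical
  have hW : ((w (x, y)).toNat : ℝ) = w (x, y) := by exact_mod_cast Int.toNat_of_nonneg hw
  rw [← hW]
  exact sum_truncGeom_filter_le_of_monotone t hp0 hp1
    (S := fun r : ℕ => y ∈ ballIn E w u r) (T := fun r : ℕ => x ∈ ballIn E w u r)
    (fun _ _ hab hr => ballIn_mono E w u (Nat.cast_le.2 hab) hr)
    (fun _ _ hab hr => ballIn_mono E w u (Nat.cast_le.2 hab) hr)
    fun r hr => by simpa [hW] using mem_ballIn_add_of_mem_ballIn E w he hr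

end Radii

end FindBalancedSet

open FindBalancedSet Finset

open Classical in
/-- Light-boundary property of `FindBalancedSet`: for independent truncated
geometric radii (the product distribution on `Fin l → Fin (t+1)` with
`Pr[dᵢ = k] = (1-p)^k p / (1-(1-p)^(t+1))`), each edge `e ∈ E` lies on the in-boundary
`δ⁻(A)` of the returned set `A` with probability at most `c² w(e) log₂ n / d`. -/
theorem find_balanced_set_light_boundary :
    ∃ c₀ : ℝ, 1 ≤ c₀ ∧ ∀ c : ℝ, c₀ ≤ c →
      ∀ (V : Type) [Fintype V] (E : Set (V × V)) (w : V × V → ℤ),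
        (∀ e ∈ E, 0 ≤ w e) →
        ∀ n : ℕ, max (Fintype.card V) 2 ≤ n →
        ∀ d : ℕ, 0 < d →
        ∀ p : ℝ, p = min (c * Real.logb 2 (n : ℝ) / (d : ℝ)) 1 →
        ∀ t : ℕ, t = d / 4 →
        ∀ l : ℕ, ∀ v : Fin l → V, Function.Injective v →
        (∀ i : Fin l, ((ballIn E w (v i) ((d : ℝ) / 4)).ncard : ℝ)
            ≤ 0.7 * (Fintype.card V : ℝ)) →
        ∀ K : (Fin l → Fin (t + 1)) → ℕ,
        (∀ f : Fin l → Fin (t + 1),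
            KSpec E w v (fun j => (f j : ℕ)) (Fintype.card V) (K f)) →
        ∀ A : (Fin l → Fin (t + 1)) → Set V,
        (∀ f : Fin l → Fin (t + 1),
            A f = prefixUnion E w v (fun j => (f j : ℕ)) (K f)) →
        ∀ e ∈ E,
          (∑ f ∈ Finset.univ.filter
              (fun f : Fin l → Fin (t + 1) => e.1 ∉ A f ∧ e.2 ∈ A f),
            ∏ i : Fin l, (1 - p) ^ (f i : ℕ) * p / (1 - (1 - p) ^ (t + 1)))
          ≤ c ^ 2 * (w e : ℝ) * Real.logb 2 (n : ℝ) / (d : ℝ) := by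
  refine ⟨8, by norm_num, fun c hc V _ E w hw n hn d hd p hp t ht l v hv _ K _ A hA ⟨x, y⟩ he => ?_⟩
  have hn2 : 2 ≤ n := le_of_max_le_right hn
  have hpc : p ≤ c * logb 2 n / d := hp ▸ min_le_left _ _
  have hp0 : 0 < p := hp ▸ lt_min (div_pos (mul_pos (by linarith)
    (logb_pos one_lt_two (by exact_mod_cast hn2))) (by exact_mod_cast hd)) one_pos
  have hp1 : p ≤ 1 := hp ▸ min_le_right _ _
  have htail : (l : ℝ) * truncGeomTail p t ≤ 1 :=
    natCast_mul_truncGeomTail_le_one t hp0 hp1 hn2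
      ((Fintype.card_fin l ▸ Fintype.card_le_of_injective v hv).trans (le_of_max_le_left hn))
      (hp ▸ ht ▸ one_sub_min_pow_le_inv_sq (by linarith) hn2 hd)
  have hw0 : (0 : ℝ) ≤ w (x, y) := by exact_mod_cast hw _ he
  calc _ ≤ ∑ f ∈ univ.filter (FirstHitIn (fun j => hitRadii E w t (v j) y)
          (fun j => cutRadii E w t (v j) x y)), ∏ i, truncGeom p t (f i) := by
        refine sum_le_sum_of_subset_of_nonneg (fun f hf => ?_)
          fun f _ _ => prod_nonneg fun i _ => truncGeom_nonneg t hp0 hp1 _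
        rw [mem_filter, hA] at hf
        rw [mem_filter]
        exact ⟨mem_univ f, firstHitIn_of_not_mem_of_mem_prefixUnion E w t hf.2.1 hf.2.2⟩
    _ ≤ w (x, y) * p * (1 + l * truncGeomTail p t) :=
        sum_prod_filter_firstHitIn_le (fun _ (k : Fin (t + 1)) => truncGeom p t k)
          (fun _ k => truncGeom_nonneg t hp0 hp1 k) (fun _ => sum_truncGeom_eq_one t hp0 hp1) _ _
          (by positivity) (truncGeomTail_nonneg t hp0 hp1)
          fun _ => sum_cutRadii_truncGeom_le E w t hp0 hp1 he (hw _ he)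
    _ ≤ c * w (x, y) * (c * logb 2 n / d) := by
        calc _ ≤ w (x, y) * p * 2 := by gcongr; linarith
          _ ≤ c * w (x, y) * p := by nlinarith [mul_nonneg hw0 hp0.le]
          _ ≤ _ := by gcongr
    _ = _ := by ring
end

section
/- Let G = (V, E, w) be a weighted directed graph with integer weights satisfying w(e) ≥ −W for all e ∈ E, where W ∈ ℕ. Suppose r : V → ℤ satisfies: (i) r_u = r_v whenever u and v lie in the same strongly connected component of G; (ii) r_u > r_v whenever (u,v) ∈ E and u, v lie in different strongly connected components of G; and (iii) w(u,v) ≥ 0 whenever (u,v) ∈ E and u, v lie in the same strongly connected component of G. Then there exists a price function ψ : V → ℤ such that w_ψ(u,v) = w(u,v) + ψ(u) − ψ(v) ≥ 0 for all (u,v) ∈ E. -/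
open Real

/-- Given a topologically-ordered SCC labelling `r` of a graph whose
intra-SCC edges are nonnegative and all of whose edge weights are at least `-W`, there is a
price function `ψ` making every edge weight nonnegative. -/
theorem fix_dag_edges {V : Type*} [Fintype V] (E : Set (V × V)) (w : V × V → ℤ)
    (W : ℕ) (hW : ∀ e ∈ E, -(W : ℤ) ≤ w e)
    (r : V → ℤ)
    (h1 : ∀ u v : V, SameSCC E u v → r u = r v)
    (h2 : ∀ u v : V, (u, v) ∈ E → ¬ SameSCC E u v → r v < r u)
    (h3 : ∀ u v : V, (u, v) ∈ E → SameSCC E u v → 0 ≤ w (u, v)) :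
    ∃ ψ : V → ℤ, ∀ u v : V, (u, v) ∈ E → 0 ≤ w (u, v) + ψ u - ψ v := by
  refine ⟨fun v => (W : ℤ) * r v, fun u v huv => ?_⟩
  show 0 ≤ w (u, v) + (W : ℤ) * r u - (W : ℤ) * r v
  by_cases h : SameSCC E u v
  · have := h3 u v huv h
    have := h1 u v h
    nlinarith
  · have h4 := h2 u v huv h
    have h5 := hW (u, v) huv
    nlinarith [mul_le_mul_of_nonneg_left (by linarith : (1:ℤ) ≤ r u - r v) (by positivity : (0:ℤ) ≤ (W:ℤ))]
end

section
/- Let G = (V, E, w) be a weighted directed graph with no negative-weight cycle and V nonempty. Define φ : V → ℤ by φ(v) = min over u ∈ V of dist_G(u, v), where the minimum is taken over those u for which a walk from u to v exists (this set is nonempty since dist_G(v,v) = 0, and each such distance is finite since G has no negative-weight cycle). Then for every edge (u,v) ∈ E, w(u,v) + φ(u) − φ(v) ≥ 0; that is, all edge weights of G_φ are nonnegative. -/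
open Real

lemma walk_append_aux {V : Type*} (E : Set (V × V)) (w : V × V → ℤ) :
    ∀ (p : List V) (s u v : V), IsWalk E s u p → (u, v) ∈ E →
      IsWalk E s v (p ++ [v]) ∧ walkWeight w s (p ++ [v]) = walkWeight w s p + w (u, v) := by
  intro p
  induction p with
  | nil => intro s u v h he; cases h; exact ⟨⟨he, rfl⟩, by simp [walkWeight]⟩
  | cons x xs ih =>
    intro s u v h he
    obtain ⟨h1, h2⟩ := h
    obtain ⟨hw, hww⟩ := ih x u v h2 he
    exact ⟨⟨h1, hw⟩, by simp [walkWeight, hww]; ring⟩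

/-- If `G` has no negative-weight cycle and `φ(v) = min_u dist_G(u, v)`
(the minimum over all walks ending at `v` of their weight), then all edge weights of `G_φ`
are nonnegative. -/
theorem johnson_potential_nonneg {V : Type*} [Fintype V] [Nonempty V]
    (E : Set (V × V)) (w : V × V → ℤ)
    (hnc : ¬ ∃ (u : V) (p : List V), IsWalk E u u p ∧ walkWeight w u p < 0)
    (phi : V → ℤ)
    (hphi : ∀ v : V,
      IsLeast {x : ℤ | ∃ (u : V) (p : List V), IsWalk E u v p ∧ walkWeight w u p = x}
        (phi v)) :
    ∀ e ∈ E, 0 ≤ w e + phi e.1 - phi e.2 := by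
  intro e he
  obtain ⟨u, v⟩ := e
  simp only at *
  obtain ⟨⟨s, p, hwalk, hwt⟩, _⟩ := hphi u
  obtain ⟨hw2, hww2⟩ := walk_append_aux E w p s u v hwalk (by simpa using he)
  have := (hphi v).2 ⟨s, p ++ [v], hw2, rfl⟩
  rw [hww2, hwt] at this
  omega
end

section
/- Let G = (V, E) be a finite directed graph, let A ⊆ V be closed under out-edges (if u ∈ A and (u,v) ∈ E then v ∈ A), let p ∈ V, let B = {x ∈ V : there is a walk from p to x}, and let C = {x ∈ V : there is a walk from p to x and a walk from x to p}. Define R₁ = V \ (A ∪ B), R₂ = A \ B, R₃ = C, R₄ = B \ (A ∪ C), R₅ = (A ∩ B) \ C. Then R₁, R₂, R₃, R₄, R₅ are pairwise disjoint, their union is V, and for every edge (x, y) ∈ E with x ∈ R_i and y ∈ R_j, one has j ≥ i (i.e., there are no edges from a set to a lower-numbered set). -/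
open Real

lemma isWalk_append {V : Type*} {E : Set (V × V)} {u v w : V} {q : List V} :
    ∀ {pl : List V}, IsWalk E u v pl → IsWalk E v w q → IsWalk E u w (pl ++ q) := by
  intro pl
  induction pl generalizing u with
  | nil => intro h1 h2; cases h1; exact h2
  | cons x xs ih => intro h1 h2; exact ⟨h1.1, ih h1.2 h2⟩

lemma reach_trans {V : Type*} {E : Set (V × V)} {u v w : V}
    (h1 : Reach E u v) (h2 : Reach E v w) : Reach E u w := by
  obtain ⟨pl, h1⟩ := h1; obtain ⟨q, h2⟩ := h2
  exact ⟨pl ++ q, isWalk_append h1 h2⟩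

lemma reach_edge {V : Type*} {E : Set (V × V)} {u v : V} (h : (u, v) ∈ E) :
    Reach E u v := ⟨[v], h, rfl⟩

lemma mem_of_reach {V : Type*} {E : Set (V × V)} {A : Set V}
    (hA : ∀ u v : V, u ∈ A → (u, v) ∈ E → v ∈ A) {u v : V}
    (h : Reach E u v) (hu : u ∈ A) : v ∈ A := by
  obtain ⟨pl, h⟩ := h
  induction pl generalizing u with
  | nil => cases h; exact hu
  | cons x xs ih => exact ih (hA u x hu h.1) h.2

/-- The partition used by SCC+TopSort: with `A` closed under out-edges,
`B` the set reachable from `p`, and `C` the SCC of `p`, the five sets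
`R₁ = V \ (A ∪ B)`, `R₂ = A \ B`, `R₃ = C`, `R₄ = B \ (A ∪ C)`, `R₅ = (A ∩ B) \ C`
partition `V` and every edge goes from a set to one of equal or higher index. -/
theorem scc_topsort_partition {V : Type*} [Fintype V] (E : Set (V × V))
    (A : Set V) (hA : ∀ u v : V, u ∈ A → (u, v) ∈ E → v ∈ A)
    (p : V) (B C : Set V)
    (hB : B = {x | Reach E p x})
    (hC : C = {x | Reach E p x ∧ Reach E x p})
    (R : Fin 5 → Set V)
    (hR : R = ![Set.univ \ (A ∪ B), A \ B, C, B \ (A ∪ C), (A ∩ B) \ C]) :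
    Pairwise (Function.onFun Disjoint R) ∧
    (⋃ i, R i) = Set.univ ∧
    (∀ x y : V, (x, y) ∈ E → ∀ i j : Fin 5, x ∈ R i → y ∈ R j → i ≤ j) := by
  subst hB hC hR
  have fin5 : ∀ i : Fin 5, i = 0 ∨ i = 1 ∨ i = 2 ∨ i = 3 ∨ i = 4 := by omega
  have key : ∀ a b : Set V, (∀ x, x ∈ a → x ∈ b → False) → Disjoint a b := by
    intro a b h
    rw [Set.disjoint_left]
    exact fun {x} hx hy => (h x hx hy).elim
  refine ⟨?_, ?_, ?_⟩
  · intro i j hij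
    rcases fin5 i with rfl | rfl | rfl | rfl | rfl <;>
      rcases fin5 j with rfl | rfl | rfl | rfl | rfl <;>
      first
      | exact absurd rfl hij
      | · refine key _ _ fun x hx hy => ?_
          simp only [Function.onFun, Fin.isValue, Matrix.cons_val_zero, Matrix.cons_val_one,
            Matrix.head_cons, Matrix.cons_val_two, Matrix.tail_cons, Matrix.cons_val_three,
            Matrix.cons_val_four, Matrix.cons_val_succ, Set.mem_diff, Set.mem_union,
            Set.mem_setOf_eq, Set.mem_inter_iff, Set.mem_univ, true_and, not_or] at hx hy
          tauto
  · ext x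
    simp only [Set.mem_iUnion, Set.mem_univ, iff_true]
    by_cases hxB : Reach E p x
    · by_cases hxC : Reach E x p
      · exact ⟨2, by
          simp only [Matrix.cons_val_two, Matrix.tail_cons, Matrix.head_cons,
            Set.mem_setOf_eq]
          exact ⟨hxB, hxC⟩⟩
      · by_cases hxA : x ∈ A
        · exact ⟨4, by
            simp only [Matrix.cons_val_four, Matrix.cons_val_succ, Set.mem_diff,
              Set.mem_inter_iff, Set.mem_setOf_eq]
            exact ⟨⟨hxA, hxB⟩, fun h => hxC h.2⟩⟩
        · exact ⟨3, by
            simp only [Matrix.cons_val_three, Matrix.cons_val_succ, Matrix.head_cons,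
              Matrix.tail_cons, Set.mem_diff, Set.mem_union, Set.mem_setOf_eq, not_or]
            exact ⟨hxB, hxA, fun h => hxC h.2⟩⟩
    · by_cases hxA : x ∈ A
      · exact ⟨1, by
          simp only [Matrix.cons_val_one, Matrix.head_cons, Set.mem_diff,
            Set.mem_setOf_eq]
          exact ⟨hxA, hxB⟩⟩
      · exact ⟨0, by
          simp only [Matrix.cons_val_zero, Set.mem_diff, Set.mem_union,
            Set.mem_setOf_eq, Set.mem_univ, true_and, not_or]
          exact ⟨hxA, hxB⟩⟩
  · intro x y hxy i j hxi hyj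
    by_contra hlt
    rw [not_le] at hlt
    have hAe : x ∈ A → y ∈ A := fun h => hA x y h hxy
    have hBe : Reach E p x → Reach E p y := fun h => reach_trans h (reach_edge hxy)
    have hCe : Reach E y p → Reach E x p := fun h => reach_trans (reach_edge hxy) h
    rcases fin5 i with rfl | rfl | rfl | rfl | rfl <;>
      rcases fin5 j with rfl | rfl | rfl | rfl | rfl <;>
      simp only [Set.mem_diff, Set.mem_union, Set.mem_setOf_eq, Set.mem_inter_iff,
        Set.mem_univ, true_and, not_or, Matrix.cons_val_zero, Matrix.cons_val_one,
        Matrix.head_cons, Matrix.cons_val_two, Matrix.tail_cons, Matrix.cons_val_three,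
        Matrix.cons_val_four, Matrix.cons_val_succ] at hxi hyj <;>
      first
      | exact absurd hlt (by decide)
      | tauto
end

section
/- Let G = (V, E, w) be a weighted directed graph with nonnegative integer edge weights, let d be a positive integer, let A_in, A_out ⊆ V, and let E^rem ⊇ δ⁻(A_in) ∪ δ⁺(A_out). Suppose every vertex v ∈ V \ (A_in ∪ A_out) satisfies |Ball^in_G(v, d/4)| > |V|/2 and |Ball^out_G(v, d/4)| > |V|/2. Then every strongly connected component C of (V, E \ E^rem) with C ⊆ V \ (A_in ∪ A_out) has weak diameter at most d in G; indeed, for any u, v ∈ V \ (A_in ∪ A_out), dist_G(u, v) ≤ d/2. -/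
open Real

/-! The radius-`d/4` out-ball of `u` and in-ball of `v` each contain more than half of the
vertices, so they share a vertex `x`; concatenating a light walk `u → x` with a light walk
`x → v` gives a walk of weight at most `d/2`. -/

section Walks

variable {V : Type*} {E : Set (V × V)} {w : V × V → ℤ}

theorem IsWalk.append : ∀ {u x v : V} {p q : List V},
    IsWalk E u x p → IsWalk E x v q → IsWalk E u v (p ++ q)
  | _, _, _, [], _, hp, hq => hp ▸ hq
  | _, _, _, _ :: _, _, hp, hq => ⟨hp.1, hp.2.append hq⟩

theorem IsWalk.getLastD_eq : ∀ {u v : V} {p : List V}, IsWalk E u v p → p.getLastD u = v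
  | _, _, [], h => h
  | _, _, _ :: p, h => by
      cases p <;> simpa [List.getLastD] using h.2.getLastD_eq

theorem walkWeight_append : ∀ (u : V) (p q : List V),
    walkWeight w u (p ++ q) = walkWeight w u p + walkWeight w (p.getLastD u) q
  | _, [], _ => by simp [walkWeight]
  | _, a :: p, q => by
      simp only [List.cons_append, walkWeight, List.getLastD_cons, add_assoc,
        walkWeight_append a p q]

theorem DistLE.trans {u x v : V} {r s : ℝ} (hux : DistLE E w u x r) (hxv : DistLE E w x v s) :
    DistLE E w u v (r + s) := by
  obtain ⟨p, hp, hpw⟩ := hux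
  obtain ⟨q, hq, hqw⟩ := hxv
  refine ⟨p ++ q, hp.append hq, ?_⟩
  rw [walkWeight_append, hp.getLastD_eq]
  push_cast
  linarith

theorem DistLE.mono {u v : V} {r s : ℝ} (h : DistLE E w u v r) (hrs : r ≤ s) :
    DistLE E w u v s :=
  let ⟨p, hp, hpw⟩ := h
  ⟨p, hp, hpw.trans hrs⟩

theorem distLE_of_card_lt_ncard_ballOut_add_ncard_ballIn [Finite V] {u v : V} {r : ℝ}
    (h : Nat.card V < (ballOut E w u r).ncard + (ballIn E w v r).ncard) :
    DistLE E w u v (r + r) :=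
  let ⟨_, hux, hxv⟩ := Set.nonempty_inter_of_lt_ncard_add_ncard h
  hux.trans hxv

end Walks

theorem heavy_scc_weak_diameter_general {V : Type*} [Fintype V] (E : Set (V × V)) (w : V × V → ℤ)
    (d : ℕ) (Ain Aout : Set V) (Erem : Set (V × V))
    (hheavy : ∀ v : V, v ∉ Ain ∪ Aout →
      (Fintype.card V : ℝ) / 2 < ((ballIn E w v ((d : ℝ) / 4)).ncard : ℝ) ∧
      (Fintype.card V : ℝ) / 2 < ((ballOut E w v ((d : ℝ) / 4)).ncard : ℝ)) :
    (∀ u v : V, u ∉ Ain ∪ Aout → v ∉ Ain ∪ Aout → DistLE E w u v ((d : ℝ) / 2)) ∧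
    (∀ C : Set V, IsSCCOf (E \ Erem) C → C ⊆ Set.univ \ (Ain ∪ Aout) →
      ∀ u ∈ C, ∀ v ∈ C, DistLE E w u v (d : ℝ) ∧ DistLE E w v u (d : ℝ)) := by
  have hclose : ∀ u v : V, u ∉ Ain ∪ Aout → v ∉ Ain ∪ Aout →
      DistLE E w u v ((d : ℝ) / 2) := by
    intro u v hu hv
    have hcard : Nat.card V <
        (ballOut E w u ((d : ℝ) / 4)).ncard + (ballIn E w v ((d : ℝ) / 4)).ncard := by
      have hout := (hheavy u hu).2
      have hin := (hheavy v hv).1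
      rw [Nat.card_eq_fintype_card, ← Nat.cast_lt (α := ℝ), Nat.cast_add]
      linarith
    exact (distLE_of_card_lt_ncard_ballOut_add_ncard_ballIn hcard).mono (by linarith)
  refine ⟨hclose, fun C _ hC u hu v hv => ?_⟩
  have hhalf : (d : ℝ) / 2 ≤ d := by linarith [(d.cast_nonneg : (0 : ℝ) ≤ d)]
  exact ⟨(hclose u v (hC hu).2 (hC hv).2).mono hhalf,
    (hclose v u (hC hv).2 (hC hu).2).mono hhalf⟩

/-- If every vertex outside `A_in ∪ A_out` has in- and out-balls of radius
`d/4` containing more than half the vertices, then any two such vertices are at distance at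
most `d/2`, and every SCC of `(V, E \ E^rem)` contained in `V \ (A_in ∪ A_out)` has weak
diameter at most `d` in `G`. -/
theorem heavy_scc_weak_diameter {V : Type*} [Fintype V] (E : Set (V × V)) (w : V × V → ℤ)
    (hw : ∀ e ∈ E, 0 ≤ w e) (d : ℕ) (hd : 0 < d)
    (Ain Aout : Set V) (Erem : Set (V × V))
    (hErem : {e ∈ E | e.1 ∉ Ain ∧ e.2 ∈ Ain} ∪ {e ∈ E | e.1 ∈ Aout ∧ e.2 ∉ Aout} ⊆ Erem)
    (hheavy : ∀ v : V, v ∉ Ain ∪ Aout →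
      (Fintype.card V : ℝ) / 2 < ((ballIn E w v ((d : ℝ) / 4)).ncard : ℝ) ∧
      (Fintype.card V : ℝ) / 2 < ((ballOut E w v ((d : ℝ) / 4)).ncard : ℝ)) :
    (∀ u v : V, u ∉ Ain ∪ Aout → v ∉ Ain ∪ Aout → DistLE E w u v ((d : ℝ) / 2)) ∧
    (∀ C : Set V, IsSCCOf (E \ Erem) C → C ⊆ Set.univ \ (Ain ∪ Aout) →
      ∀ u ∈ C, ∀ v ∈ C, DistLE E w u v (d : ℝ) ∧ DistLE E w v u (d : ℝ)) :=
  heavy_scc_weak_diameter_general E w d Ain Aout Erem hheavy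
end
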